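/- For every matrix M ∈ GL(2,ℤ) there is exactly one canonical word w ∈ Σ* such that φ(w) = M. -/

import Mathlib

/-- 2×2 integer matrices. -/
abbrev M2 := Matrix (Fin 2) (Fin 2) ℤ

/-- A matrix belongs to GL(2,ℤ), i.e. has determinant ±1. -/
def IsGL (A : M2) : Prop := A.det = 1 ∨ A.det = -1

/-- The four-letter alphabet Σ = {X, N, S, R}. -/
inductive Alph : Type | X | N | S | R
deriving DecidableEq

instance instFintypeAlph : Fintype Alph where
  elems := {Alph.X, Alph.N, Alph.S, Alph.R}
  complete := by intro x; cases x <;> simp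

/-- The matrices assigned to letters of Σ. -/
def phiLetter : Alph → M2
  | Alph.X => !![-1, 0; 0, -1]
  | Alph.N => !![1, 0; 0, -1]
  | Alph.S => !![0, -1; 1, 0]
  | Alph.R => !![0, -1; 1, 1]

/-- The monoid homomorphism φ : Σ* → GL(2,ℤ) (valued in matrices). -/
def phi (w : List Alph) : M2 := (w.map phiLetter).prod

/-- A word over Σ is canonical: no subword SS or RRR, the letter N occurs only in
the first position, and X occurs only in the first position or immediately after N. -/
def Canonical (w : List Alph) : Prop :=
  ¬ [Alph.S, Alph.S] <:+: w ∧
  ¬ [Alph.R, Alph.R, Alph.R] <:+: w ∧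
  (∀ i : Fin w.length, w.get i = Alph.N → (i : ℕ) = 0) ∧
  (∀ i : Fin w.length, w.get i = Alph.X →
      (i : ℕ) = 0 ∨ ((i : ℕ) = 1 ∧ w.get ⟨0, Nat.lt_of_le_of_lt (Nat.zero_le _) i.isLt⟩ = Alph.N))

/-- A subset of GL(2,ℤ) is regular if it is the image under φ of a regular language. -/
def RegularSubset (S : Set M2) : Prop :=
  ∃ L : Language Alph, L.IsRegular ∧ phi '' L = S

/-!
With `T = !![1, 1; 0, 1]` and `L = !![1, 0; 1, 1]` one has `SR = -T` and `SRR = -L`, so a reduced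
word over `{S, R}` (one free of `SS` and `RRR`) evaluates to `± R ^ a * W * S ^ e` with `a ≤ 2`,
`e ≤ 1` and `W` a product of `T`s and `L`s. Such products have nonnegative entries and positive
diagonal; this makes the monoid they generate free (the first factor is visible in the first column)
and the twelve families `± R ^ a * W * S ^ e` disjoint, which gives uniqueness. For existence, `S`
and `T` generate SL(2, ℤ), and multiplying such a word on the left by `S` or `R` keeps it reduced
once `SS = RRR = -1` is cancelled; the letters `N` and `X` account for the determinant and the sign.
-/

open Alph

@[simp] lemma phi_nil : phi [] = 1 := rfl

@[simp] lemma phi_cons (x : Alph) (w : List Alph) : phi (x :: w) = phiLetter x * phi w := by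
  simp [phi]

@[simp] lemma phi_append (u v : List Alph) : phi (u ++ v) = phi u * phi v := by
  simp [phi]

@[simp] lemma phi_replicate (n : ℕ) (x : Alph) : phi (List.replicate n x) = phiLetter x ^ n := by
  simp [phi]

lemma isUnit_phi (w : List Alph) : IsUnit (phi w) := by
  refine List.prod_isUnit fun M hM => ?_
  obtain ⟨x, -, rfl⟩ := List.mem_map.mp hM
  rw [Matrix.isUnit_iff_isUnit_det]
  cases x <;> decide

lemma phiLetter_X : phiLetter X = -1 := by decide

lemma phiLetter_N_mul_self : phiLetter N * phiLetter N = 1 := by decide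

lemma phiLetter_S_mul_self : phiLetter S * phiLetter S = -1 := by decide

lemma phiLetter_R_pow_three : phiLetter R ^ 3 = -1 := by decide

lemma det_phiLetter_N : (phiLetter N).det = -1 := by decide

-- `T` and `L`, which freely generate the monoid SL(2, ℕ)
def blockMat : Bool → M2
  | false => !![1, 1; 0, 1]
  | true => !![1, 0; 1, 1]

def blockProd (bs : List Bool) : M2 := (bs.map blockMat).prod

def NonnegPosDiag (M : M2) : Prop := 1 ≤ M 0 0 ∧ 0 ≤ M 0 1 ∧ 0 ≤ M 1 0 ∧ 1 ≤ M 1 1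

lemma blockMat_mul_eq (b : Bool) (M : M2) :
    blockMat b * M = if b then !![M 0 0, M 0 1; M 0 0 + M 1 0, M 0 1 + M 1 1]
      else !![M 0 0 + M 1 0, M 0 1 + M 1 1; M 1 0, M 1 1] := by
  rw [M.eta_fin_two]
  cases b <;> simp [blockMat]

lemma NonnegPosDiag.blockMat_mul {M : M2} (hM : NonnegPosDiag M) (b : Bool) :
    NonnegPosDiag (blockMat b * M) := by
  obtain ⟨h1, h2, h3, h4⟩ := hM
  cases b <;> simp [blockMat_mul_eq, NonnegPosDiag] <;> omega

lemma nonnegPosDiag_blockProd (bs : List Bool) : NonnegPosDiag (blockProd bs) := by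
  induction bs with
  | nil => simp [blockProd, NonnegPosDiag]
  | cons b bs ih => simpa [blockProd] using ih.blockMat_mul b

lemma NonnegPosDiag.blockMat_mul_lt_iff {M : M2} (hM : NonnegPosDiag M) (b : Bool) :
    (blockMat b * M) 1 0 < (blockMat b * M) 0 0 ↔ b = false := by
  obtain ⟨h1, h2, h3, h4⟩ := hM
  cases b <;> simp [blockMat_mul_eq] <;> omega

lemma NonnegPosDiag.blockMat_mul_ne_one {M : M2} (hM : NonnegPosDiag M) (b : Bool) :
    blockMat b * M ≠ 1 := by
  obtain ⟨h1, h2, h3, h4⟩ := hM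
  intro h
  have h01 := congrFun₂ h 0 1
  have h10 := congrFun₂ h 1 0
  cases b <;> simp [blockMat_mul_eq] at h01 h10 <;> omega

lemma blockProd_injective : Function.Injective blockProd := by
  intro bs bs' h
  induction bs generalizing bs' with
  | nil =>
    cases bs' with
    | nil => rfl
    | cons b' bs' => exact absurd h.symm ((nonnegPosDiag_blockProd bs').blockMat_mul_ne_one b')
  | cons b bs ih =>
    cases bs' with
    | nil => exact absurd h ((nonnegPosDiag_blockProd bs).blockMat_mul_ne_one b)
    | cons b' bs' =>
      change blockMat b * blockProd bs = blockMat b' * blockProd bs' at h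
      have hb : b = b' := by
        have := (nonnegPosDiag_blockProd bs).blockMat_mul_lt_iff b
        rw [h, (nonnegPosDiag_blockProd bs').blockMat_mul_lt_iff b'] at this
        cases b <;> cases b' <;> simp_all
      subst hb
      have hu : IsUnit (blockMat b) := by
        rw [Matrix.isUnit_iff_isUnit_det]; cases b <;> decide
      rw [ih (hu.mul_left_cancel h)]

def IsReducedWord (c : List Alph) : Prop :=
  X ∉ c ∧ N ∉ c ∧ ¬[S, S] <:+: c ∧ ¬[R, R, R] <:+: c

lemma isReducedWord_nil : IsReducedWord [] := by simp [IsReducedWord]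

lemma isReducedWord_cons_iff {x : Alph} {c : List Alph} :
    IsReducedWord (x :: c) ↔
      x ≠ X ∧ x ≠ N ∧ ¬[S, S] <+: x :: c ∧ ¬[R, R, R] <+: x :: c ∧ IsReducedWord c := by
  simp only [IsReducedWord, List.mem_cons, List.infix_cons_iff]
  tauto

lemma IsReducedWord.of_cons {x : Alph} {c : List Alph} (hc : IsReducedWord (x :: c)) :
    IsReducedWord c :=
  (isReducedWord_cons_iff.mp hc).2.2.2.2

lemma IsReducedWord.det_phi {c : List Alph} (hc : IsReducedWord c) : (phi c).det = 1 := by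
  induction c with
  | nil => simp
  | cons x c ih =>
    obtain ⟨hX, hN, -, -, hc⟩ := isReducedWord_cons_iff.mp hc
    cases x <;> simp_all [Matrix.det_mul] <;> decide

def blockWord (b : Bool) : List Alph := if b then [S, R, R] else [S, R]

def reducedWord (a : ℕ) (bs : List Bool) (e : ℕ) : List Alph :=
  List.replicate a R ++ bs.flatMap blockWord ++ List.replicate e S

lemma IsReducedWord.exists_eq_reducedWord {c : List Alph} (hc : IsReducedWord c) :
    ∃ a ≤ 2, ∃ bs, ∃ e ≤ 1, c = reducedWord a bs e := by
  induction c with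
  | nil => exact ⟨0, by norm_num, [], 0, by norm_num, rfl⟩
  | cons x c ih =>
    obtain ⟨hX, hN, hSS, hRRR, -⟩ := isReducedWord_cons_iff.mp hc
    obtain ⟨a, ha, bs, e, he, rfl⟩ := ih hc.of_cons
    cases x
    · exact absurd rfl hX
    · exact absurd rfl hN
    · interval_cases a
      · rcases bs with _ | ⟨b, bs⟩
        · interval_cases e
          · exact ⟨0, by norm_num, [], 1, le_rfl, rfl⟩
          · simp [reducedWord] at hSS
        · cases b <;> simp [reducedWord, blockWord] at hSS
      · exact ⟨0, by norm_num, false :: bs, e, he, by simp [reducedWord, blockWord]⟩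
      · exact ⟨0, by norm_num, true :: bs, e, he, by simp [reducedWord, blockWord]⟩
    · refine ⟨a + 1, ?_, bs, e, he, by simp [reducedWord, List.replicate_succ]⟩
      by_contra! h
      obtain rfl : a = 2 := by omega
      simp [reducedWord] at hRRR

lemma phi_reducedWord (a : ℕ) (bs : List Bool) (e : ℕ) :
    phi (reducedWord a bs e) =
      (-1 : ℤˣ) ^ bs.length • (phiLetter R ^ a * blockProd bs * phiLetter S ^ e) := by
  have hblocks : phi (bs.flatMap blockWord) = (-1 : ℤˣ) ^ bs.length • blockProd bs := by
    induction bs with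
    | nil => simp [blockProd]
    | cons b bs ih =>
      have hb : phi (blockWord b) = (-1 : ℤˣ) • blockMat b := by cases b <;> decide
      simp only [List.flatMap_cons, phi_append, ih, hb, blockProd, List.map_cons, List.prod_cons,
        List.length_cons, pow_succ, smul_mul_smul_comm, mul_comm]
  simp [reducedWord, hblocks, Matrix.mul_smul, Matrix.smul_mul, mul_assoc]

lemma NonnegPosDiag.eq_of_smul_mul_S_pow_eq {M M' : M2} (hM : NonnegPosDiag M)
    (hM' : NonnegPosDiag M') {k f f' : ℕ} (hk : k ≤ 2) (hf : f ≤ 1) (hf' : f' ≤ 1) {ε : ℤˣ}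
    (h : ε • (M * phiLetter S ^ f) = phiLetter R ^ k * M' * phiLetter S ^ f') :
    k = 0 ∧ f = f' ∧ ε = 1 := by
  rw [M.eta_fin_two, M'.eta_fin_two, ← Matrix.ext_iff] at h
  simp only [Fin.forall_fin_two] at h
  obtain ⟨h1, h2, h3, h4⟩ := hM
  obtain ⟨h1', h2', h3', h4'⟩ := hM'
  rcases Int.units_eq_one_or ε with rfl | rfl <;>
    interval_cases k <;> interval_cases f <;> interval_cases f' <;>
    simp [phiLetter, pow_two, Units.smul_def] at h ⊢ <;> omega

lemma isUnit_phiLetter_pow (x : Alph) (n : ℕ) : IsUnit (phiLetter x ^ n) := by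
  simpa using (isUnit_phi (List.replicate n x))

lemma NonnegPosDiag.eq_of_smul_R_pow_mul_mul_S_pow_eq {M M' : M2} (hM : NonnegPosDiag M)
    (hM' : NonnegPosDiag M') {a a' e e' : ℕ} (ha : a ≤ 2) (ha' : a' ≤ 2) (he : e ≤ 1)
    (he' : e' ≤ 1) {ε ε' : ℤˣ}
    (h : ε • (phiLetter R ^ a * M * phiLetter S ^ e) =
      ε' • (phiLetter R ^ a' * M' * phiLetter S ^ e')) :
    ε = ε' ∧ a = a' ∧ M = M' ∧ e = e' := by
  wlog hle : a ≤ a' generalizing M M' a a' e e' ε ε'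
  · obtain ⟨h1, h2, h3, h4⟩ := this hM' hM ha' ha he' he h.symm (by omega)
    exact ⟨h1.symm, h2.symm, h3.symm, h4.symm⟩
  obtain ⟨k, rfl⟩ := Nat.exists_eq_add_of_le hle
  have hk : (ε'⁻¹ * ε) • (M * phiLetter S ^ e) = phiLetter R ^ k * M' * phiLetter S ^ e' := by
    apply (isUnit_phiLetter_pow R a).mul_left_cancel
    rw [mul_smul, mul_smul_comm, mul_smul_comm, ← mul_assoc, ← mul_assoc, h, inv_smul_smul,
      pow_add]
    simp only [mul_assoc]
  obtain ⟨rfl, rfl, hε⟩ := hM.eq_of_smul_mul_S_pow_eq hM' (by omega) he he' hk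
  rw [inv_mul_eq_one] at hε
  subst hε
  refine ⟨rfl, rfl, ?_, rfl⟩
  rw [add_zero, smul_left_cancel_iff] at h
  exact (isUnit_phiLetter_pow R a).mul_left_cancel ((isUnit_phiLetter_pow S e).mul_right_cancel
    (by simpa only [mul_assoc] using h))

lemma IsReducedWord.eq_of_phi_eq_smul {u v : List Alph} (hu : IsReducedWord u)
    (hv : IsReducedWord v) {ε : ℤˣ} (h : phi u = ε • phi v) : u = v ∧ ε = 1 := by
  obtain ⟨a, ha, bs, e, he, rfl⟩ := hu.exists_eq_reducedWord
  obtain ⟨a', ha', bs', e', he', rfl⟩ := hv.exists_eq_reducedWord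
  rw [phi_reducedWord, phi_reducedWord, smul_smul] at h
  obtain ⟨hε, rfl, hbs, rfl⟩ := (nonnegPosDiag_blockProd bs).eq_of_smul_R_pow_mul_mul_S_pow_eq
    (nonnegPosDiag_blockProd bs') ha ha' he he' h
  obtain rfl := blockProd_injective hbs
  exact ⟨rfl, by simpa using hε⟩

def HasReducedWord (M : M2) : Prop := ∃ c, IsReducedWord c ∧ ∃ ε : ℤˣ, phi c = ε • M

lemma hasReducedWord_one : HasReducedWord 1 := ⟨[], isReducedWord_nil, 1, by simp⟩

lemma HasReducedWord.smul {M : M2} (hM : HasReducedWord M) (δ : ℤˣ) :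
    HasReducedWord (δ • M) := by
  obtain ⟨c, hc, ε, h⟩ := hM
  exact ⟨c, hc, ε * δ⁻¹, by rw [h, mul_smul, inv_smul_smul]⟩

lemma HasReducedWord.S_mul {M : M2} (hM : HasReducedWord M) : HasReducedWord (phiLetter S * M) := by
  obtain ⟨c, hc, ε, h⟩ := hM
  by_cases hS : [S] <+: c
  · obtain ⟨c', rfl⟩ := hS
    rw [List.singleton_append] at hc h
    refine ⟨c', hc.of_cons, -ε, ?_⟩
    have hc' : phi c' = -(phiLetter S * phi (S :: c')) := by
      simp [← mul_assoc, phiLetter_S_mul_self]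
    rw [hc', h, mul_smul_comm, Units.neg_smul]
  · refine ⟨S :: c, isReducedWord_cons_iff.mpr ⟨by simp, by simp, by simpa using hS, by simp, hc⟩,
      ε, ?_⟩
    rw [phi_cons, h, mul_smul_comm]

lemma HasReducedWord.R_mul {M : M2} (hM : HasReducedWord M) : HasReducedWord (phiLetter R * M) := by
  obtain ⟨c, hc, ε, h⟩ := hM
  by_cases hRR : [R, R] <+: c
  · obtain ⟨c', rfl⟩ := hRR
    simp only [List.cons_append, List.nil_append] at hc h
    refine ⟨c', hc.of_cons.of_cons, -ε, ?_⟩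
    have hc' : phi c' = -(phiLetter R * phi (R :: R :: c')) := by
      simp [← mul_assoc, ← pow_three', phiLetter_R_pow_three]
    rw [hc', h, mul_smul_comm, Units.neg_smul]
  · refine ⟨R :: c, isReducedWord_cons_iff.mpr ⟨by simp, by simp, by simp, by simpa using hRR, hc⟩,
      ε, ?_⟩
    rw [phi_cons, h, mul_smul_comm]

open MatrixGroups in
lemma hasReducedWord_of_det_eq_one {A : M2} (hA : A.det = 1) : HasReducedWord A := by
  have hT : (ModularGroup.T : M2) = (-1 : ℤˣ) • (phiLetter S * phiLetter R) := by decide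
  have hT' : ((ModularGroup.T⁻¹ : SL(2, ℤ)) : M2) =
      (-1 : ℤˣ) • (phiLetter R * (phiLetter R * phiLetter S)) := by
    rw [ModularGroup.coe_T_inv]; decide
  have hS' : ((ModularGroup.S⁻¹ : SL(2, ℤ)) : M2) = (-1 : ℤˣ) • phiLetter S := by
    rw [ModularGroup.S_inv]; decide
  suffices ∀ g : SL(2, ℤ), HasReducedWord g from this ⟨A, hA⟩
  intro g
  have hmem : g ∈ Subgroup.closure {ModularGroup.S, ModularGroup.T} := by
    simp [SpecialLinearGroup.SL2Z_generators]
  induction hmem using Subgroup.closure_induction_left with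
  | one => exact hasReducedWord_one
  | mul_left g hg B _ ih =>
    rcases hg with rfl | rfl
    · exact ih.S_mul
    · rw [Matrix.SpecialLinearGroup.coe_mul, hT, smul_mul_assoc, mul_assoc]
      exact ih.R_mul.S_mul.smul _
  | inv_mul_cancel g hg B _ ih =>
    rcases hg with rfl | rfl
    · rw [Matrix.SpecialLinearGroup.coe_mul, hS', smul_mul_assoc]
      exact ih.S_mul.smul _
    · rw [Matrix.SpecialLinearGroup.coe_mul, hT', smul_mul_assoc, mul_assoc, mul_assoc]
      exact ih.S_mul.R_mul.R_mul.smul _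

lemma forall_getElem_ne_iff {α : Type*} {l : List α} {a : α} :
    (∀ i : Fin l.length, ¬l[(i : ℕ)] = a) ↔ a ∉ l := by
  simp [List.mem_iff_get]

def prefixWord (d g : Bool) : List Alph := (if d then [N] else []) ++ (if g then [X] else [])

lemma canonical_prefixWord_append {d g : Bool} {c : List Alph} (hc : IsReducedWord c) :
    Canonical (prefixWord d g ++ c) := by
  obtain ⟨hX, hN, hSS, hRRR⟩ := hc
  have hX' := forall_getElem_ne_iff.mpr hX
  have hN' := forall_getElem_ne_iff.mpr hN
  cases d <;> cases g <;>
    simp_all [Canonical, prefixWord, Fin.forall_fin_succ, List.infix_cons_iff]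

lemma Canonical.exists_eq_prefixWord_append {w : List Alph} (hw : Canonical w) :
    ∃ d g c, IsReducedWord c ∧ w = prefixWord d g ++ c := by
  rcases w with _ | ⟨x, c⟩
  · exact ⟨false, false, [], isReducedWord_nil, rfl⟩
  cases x
  case' X => refine ⟨false, true, c, ?_, rfl⟩
  case' S | R => refine ⟨false, false, _ :: c, ?_, rfl⟩
  case' N =>
    rcases c with _ | ⟨y, c⟩
    · exact ⟨true, false, [], isReducedWord_nil, rfl⟩
    cases y
    case' X => refine ⟨true, true, c, ?_, rfl⟩
    case' S | R => refine ⟨true, false, _ :: c, ?_, rfl⟩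
    case' N => simp [Canonical, Fin.forall_fin_succ] at hw
  all_goals simp_all [Canonical, IsReducedWord, Fin.forall_fin_succ, List.infix_cons_iff,
    ← forall_getElem_ne_iff]

lemma phi_prefixWord_append (d g : Bool) (c : List Alph) :
    phi (prefixWord d g ++ c) =
      (if d then phiLetter N else 1) * ((if g then -1 else 1 : ℤˣ) • phi c) := by
  cases d <;> cases g <;> simp [prefixWord, phiLetter_X]

lemma exists_prefixWord_append_eq {A : M2} (hA : IsGL A) :
    ∃ d g c, IsReducedWord c ∧ phi (prefixWord d g ++ c) = A := by
  obtain ⟨d, hd⟩ : ∃ d : Bool, ((if d then phiLetter N else 1) * A).det = 1 := by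
    rcases hA with h | h
    · exact ⟨false, by simpa using h⟩
    · exact ⟨true, by simp [Matrix.det_mul, det_phiLetter_N, h]⟩
  obtain ⟨c, hc, ε, hε⟩ := hasReducedWord_of_det_eq_one hd
  refine ⟨d, ε ≠ 1, c, hc, ?_⟩
  rw [phi_prefixWord_append, hε]
  rcases Int.units_eq_one_or ε with rfl | rfl <;> cases d <;>
    simp [← mul_assoc, phiLetter_N_mul_self]

lemma det_phi_prefixWord_append (d g : Bool) {c : List Alph} (hc : IsReducedWord c) :
    (phi (prefixWord d g ++ c)).det = if d then -1 else 1 := by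
  cases d <;> cases g <;>
    simp [prefixWord, phiLetter_X, Matrix.det_mul, det_phiLetter_N, hc.det_phi, Matrix.det_neg]

lemma eq_of_phi_prefixWord_append_eq {d d' g g' : Bool} {c c' : List Alph} (hc : IsReducedWord c)
    (hc' : IsReducedWord c') (h : phi (prefixWord d g ++ c) = phi (prefixWord d' g' ++ c')) :
    d = d' ∧ g = g' ∧ c = c' := by
  obtain rfl : d = d' := by
    have hdet := congrArg Matrix.det h
    rw [det_phi_prefixWord_append d g hc, det_phi_prefixWord_append d' g' hc'] at hdet
    revert hdet
    cases d <;> cases d' <;> norm_num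
  rw [phi_prefixWord_append, phi_prefixWord_append] at h
  have h' : phi c = ((if g then -1 else 1 : ℤˣ)⁻¹ * (if g' then -1 else 1)) • phi c' := by
    rw [mul_smul, eq_inv_smul_iff]
    cases d
    · simpa using h
    · exact (isUnit_phi [N]).mul_left_cancel (by simpa using h)
  obtain ⟨rfl, hg⟩ := hc.eq_of_phi_eq_smul hc' h'
  refine ⟨rfl, ?_, rfl⟩
  revert hg
  cases g <;> cases g' <;> decide

/-- Every matrix in GL(2,ℤ) is represented by exactly one canonical word. -/
theorem exists_unique_canonical_word_GL (A : M2) (hA : IsGL A) :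
    ∃! w : List Alph, Canonical w ∧ phi w = A := by
  obtain ⟨d, g, c, hc, rfl⟩ := exists_prefixWord_append_eq hA
  refine ⟨prefixWord d g ++ c, ⟨canonical_prefixWord_append hc, rfl⟩, ?_⟩
  rintro w ⟨hw, hwA⟩
  obtain ⟨d', g', c', hc', rfl⟩ := hw.exists_eq_prefixWord_append
  obtain ⟨rfl, rfl, rfl⟩ := eq_of_phi_prefixWord_append_eq hc' hc hwA
  rfl
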